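/- arXiv:1603.06564 — 3 statements merged into one kernel-verified Lean document; each statement's English description precedes it below -/
import Mathlib

section
/- Le Cam's inequality: Let ξ₁, …, ξ_a be independent Bernoulli random variables with parameters q₁, …, q_a, let S = ξ₁ + ⋯ + ξ_a and λ = q₁ + ⋯ + q_a. Then ∑_{j=1}^∞ |P(S = j) − λ^j e^{−λ}/j!| ≤ 2 ∑_{i=1}^a q_i². -/
/-! Identify the law of an `ℕ`-valued variable with a real sequence and measure distances by the
`ℓ¹` norm. The law of a sum of independent variables is the Cauchy product of their laws, and
`Po(l) ∗ Po(m) = Po(l + m)`. Convolution with a probability sequence does not increase the `ℓ¹`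
norm, hence `‖f ∗ h - g ∗ k‖₁ ≤ ‖f - g‖₁ + ‖h - k‖₁` when `g` and `h` are probability sequences.
By induction on the number of summands, the distance from the law of `S` to `Po(λ)` is at most
the sum of the distances from `Bernoulli(qᵢ)` to `Po(qᵢ)`, each of which equals
`2 qᵢ (1 - e^{-qᵢ}) ≤ 2 qᵢ²`. Dropping the term `j = 0` only decreases the sum. -/

open MeasureTheory ProbabilityTheory Finset
open scoped Nat

namespace LeCam

noncomputable def natConv (f g : ℕ → ℝ) (n : ℕ) : ℝ := ∑ kl ∈ antidiagonal n, f kl.1 * g kl.2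

lemma natConv_sub_natConv (f g h k : ℕ → ℝ) (n : ℕ) :
    natConv f h n - natConv g k n = natConv (f - g) h n + natConv g (h - k) n := by
  simp only [natConv, Pi.sub_apply, ← sum_sub_distrib, ← sum_add_distrib]
  exact sum_congr rfl fun _ _ => by ring

lemma abs_natConv_le (f g : ℕ → ℝ) (n : ℕ) :
    |natConv f g n| ≤ natConv (|f ·|) (|g ·|) n :=
  (abs_sum_le_sum_abs _ _).trans_eq (sum_congr rfl fun _ _ => abs_mul _ _)

lemma hasSum_natConv_abs {f g : ℕ → ℝ} (hf : Summable f) (hg : Summable g) :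
    HasSum (natConv (|f ·|) (|g ·|)) ((∑' n, |f n|) * ∑' n, |g n|) := by
  have hf' : Summable fun n => ‖|f n|‖ := by simpa only [norm_abs_eq_norm] using hf.norm
  have hg' : Summable fun n => ‖|g n|‖ := by simpa only [norm_abs_eq_norm] using hg.norm
  rw [tsum_mul_tsum_eq_tsum_sum_antidiagonal_of_summable_norm hf' hg']
  exact (summable_norm_sum_mul_antidiagonal_of_summable_norm hf' hg').of_norm.hasSum

lemma summable_natConv {f g : ℕ → ℝ} (hf : Summable f) (hg : Summable g) :
    Summable (natConv f g) :=
  ((hasSum_natConv_abs hf hg).summable.of_nonneg_of_le (fun _ => abs_nonneg _)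
    (abs_natConv_le f g)).of_abs

lemma tsum_abs_natConv_le {f g : ℕ → ℝ} (hf : Summable f) (hg : Summable g) :
    ∑' n, |natConv f g n| ≤ (∑' n, |f n|) * ∑' n, |g n| := by
  rw [← (hasSum_natConv_abs hf hg).tsum_eq]
  exact (summable_natConv hf hg).abs.tsum_le_tsum (abs_natConv_le f g)
    (hasSum_natConv_abs hf hg).summable

lemma tsum_abs_eq_one {g : ℕ → ℝ} (hg₀ : 0 ≤ g) (hg : HasSum g 1) : ∑' n, |g n| = 1 := by
  simp_rw [abs_of_nonneg (hg₀ _)]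
  exact hg.tsum_eq

lemma tsum_abs_natConv_sub_natConv_le {f g h k : ℕ → ℝ} (hf : Summable f) (hg₀ : 0 ≤ g)
    (hg : HasSum g 1) (hh₀ : 0 ≤ h) (hh : HasSum h 1) (hk : Summable k) :
    ∑' n, |natConv f h n - natConv g k n| ≤ ∑' n, |f n - g n| + ∑' n, |h n - k n| := by
  have hfg : Summable (f - g) := hf.sub hg.summable
  have hhk : Summable (h - k) := hh.summable.sub hk
  calc ∑' n, |natConv f h n - natConv g k n|
      = ∑' n, |natConv (f - g) h n + natConv g (h - k) n| := by simp_rw [natConv_sub_natConv]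
    _ ≤ ∑' n, (|natConv (f - g) h n| + |natConv g (h - k) n|) :=
      ((summable_natConv hfg hh.summable).add (summable_natConv hg.summable hhk)).abs.tsum_le_tsum
        (fun _ => abs_add_le _ _)
        ((summable_natConv hfg hh.summable).abs.add (summable_natConv hg.summable hhk).abs)
    _ = ∑' n, |natConv (f - g) h n| + ∑' n, |natConv g (h - k) n| :=
      (summable_natConv hfg hh.summable).abs.tsum_add (summable_natConv hg.summable hhk).abs
    _ ≤ (∑' n, |f n - g n|) * ∑' n, |h n| + (∑' n, |g n|) * ∑' n, |h n - k n| :=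
      add_le_add (tsum_abs_natConv_le hfg hh.summable) (tsum_abs_natConv_le hg.summable hhk)
    _ = ∑' n, |f n - g n| + ∑' n, |h n - k n| := by
      rw [tsum_abs_eq_one hh₀ hh, tsum_abs_eq_one hg₀ hg, mul_one, one_mul]

noncomputable def poissonMass (l : ℝ) (n : ℕ) : ℝ := l ^ n * Real.exp (-l) / n !

lemma poissonMass_nonneg {l : ℝ} (hl : 0 ≤ l) : 0 ≤ poissonMass l :=
  fun n => by unfold poissonMass; positivity

lemma hasSum_poissonMass (l : ℝ) : HasSum (poissonMass l) 1 := by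
  convert! (NormedSpace.expSeries_div_hasSum_exp l).mul_right (Real.exp (-l)) using 1
  · funext n
    rw [poissonMass, div_mul_eq_mul_div]
  · rw [← Real.exp_eq_exp_ℝ, ← Real.exp_add, add_neg_cancel, Real.exp_zero]

lemma natConv_poissonMass (l m : ℝ) :
    natConv (poissonMass l) (poissonMass m) = poissonMass (l + m) := by
  funext n
  simp only [natConv, poissonMass, (Commute.all l m).add_pow', sum_mul, sum_div]
  refine sum_congr rfl fun kl hkl => ?_
  rw [HasAntidiagonal.mem_antidiagonal] at hkl
  subst hkl
  rw [nsmul_eq_mul, Nat.cast_add_choose, neg_add, Real.exp_add]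
  field_simp

noncomputable def bernoulliMass (p : ℝ) : ℕ → ℝ
  | 0 => 1 - p
  | 1 => p
  | _ + 2 => 0

lemma tsum_abs_bernoulliMass_sub_poissonMass_le {p : ℝ} (hp : 0 ≤ p) :
    ∑' n, |bernoulliMass p n - poissonMass p n| ≤ 2 * p ^ 2 := by
  have htail : (fun n => |bernoulliMass p (n + 2) - poissonMass p (n + 2)|) =
      fun n => poissonMass p (n + 2) := by
    funext n
    rw [bernoulliMass, zero_sub, abs_neg, abs_of_nonneg (poissonMass_nonneg hp _)]
  have hπ : ∑' n, poissonMass p (n + 2) = 1 - poissonMass p 0 - poissonMass p 1 := by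
    rw [← (hasSum_poissonMass p).tsum_eq, ← (hasSum_poissonMass p).summable.sum_add_tsum_nat_add 2]
    simp only [sum_range_succ, sum_range_zero, zero_add]
    ring
  have hs : Summable fun n => |bernoulliMass p n - poissonMass p n| :=
    (summable_nat_add_iff 2).mp
      (htail ▸ (summable_nat_add_iff 2).mpr (hasSum_poissonMass p).summable)
  have hπ₀ : poissonMass p 0 = Real.exp (-p) := by simp [poissonMass]
  have hπ₁ : poissonMass p 1 = p * Real.exp (-p) := by simp [poissonMass]
  rw [← hs.sum_add_tsum_nat_add 2, htail, hπ, sum_range_succ, sum_range_one, hπ₀, hπ₁]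
  simp only [bernoulliMass]
  have hexp : 1 - p ≤ Real.exp (-p) := by linarith [Real.add_one_le_exp (-p)]
  have hexp' : p * Real.exp (-p) ≤ p :=
    mul_le_of_le_one_right hp (Real.exp_le_one_iff.mpr (neg_nonpos.mpr hp))
  rw [abs_of_nonpos (by linarith), abs_of_nonneg (by linarith)]
  nlinarith [mul_le_mul_of_nonneg_left hexp hp]

section Probability

variable {Ω : Type*} [MeasurableSpace Ω] {μ : Measure Ω}

noncomputable def probMass (μ : Measure Ω) (X : Ω → ℕ) (n : ℕ) : ℝ := μ.real {ω | X ω = n}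

lemma probMass_nonneg (μ : Measure Ω) (X : Ω → ℕ) : 0 ≤ probMass μ X := fun _ => measureReal_nonneg

lemma hasSum_probMass [IsProbabilityMeasure μ] {X : Ω → ℕ} (hX : Measurable X) :
    HasSum (probMass μ X) 1 := by
  have h : ∑' n, μ (X ⁻¹' {n}) = 1 := by
    rw [← tsum_univ, tsum_measure_preimage_singleton Set.countable_univ
      (fun n _ => hX (measurableSet_singleton n)), Set.preimage_univ, measure_univ]
  have hsum := ENNReal.hasSum_toReal (f := fun n => μ (X ⁻¹' {n})) (h ▸ ENNReal.one_ne_top)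
  rwa [← ENNReal.tsum_toReal_eq (fun _ => measure_ne_top _ _), h, ENNReal.toReal_one] at hsum

lemma probMass_add [IsFiniteMeasure μ] {X Y : Ω → ℕ} (hX : Measurable X) (hY : Measurable Y)
    (hXY : IndepFun X Y μ) : probMass μ (X + Y) = natConv (probMass μ X) (probMass μ Y) := by
  funext n
  have hunion : {ω | (X + Y) ω = n} = ⋃ kl ∈ antidiagonal n, X ⁻¹' {kl.1} ∩ Y ⁻¹' {kl.2} := by
    ext ω
    simp
  have hdisj : Set.PairwiseDisjoint (antidiagonal n : Set (ℕ × ℕ))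
      (fun kl => X ⁻¹' {kl.1} ∩ Y ⁻¹' {kl.2}) := by
    intro kl _ kl' _ hne
    refine Set.disjoint_left.mpr fun ω h h' => hne ?_
    exact Prod.ext (h.1.symm.trans h'.1) (h.2.symm.trans h'.2)
  rw [probMass, hunion, measureReal_biUnion_finset hdisj
    (fun kl _ => (hX (measurableSet_singleton _)).inter (hY (measurableSet_singleton _)))]
  refine sum_congr rfl fun kl _ => ?_
  rw [measureReal_def, hXY.measure_inter_preimage_eq_mul _ _ (measurableSet_singleton _)
    (measurableSet_singleton _), ENNReal.toReal_mul]
  rfl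

lemma probMass_eq_bernoulliMass [IsProbabilityMeasure μ] {X : Ω → ℕ} (hX : Measurable X) {p : ℝ}
    (h₁ : probMass μ X 1 = p) (h₀ : probMass μ X 0 = 1 - p) :
    probMass μ X = bernoulliMass p := by
  funext n
  match n with
  | 0 => exact h₀
  | 1 => exact h₁
  | m + 2 =>
    have hle := sum_le_hasSum {0, 1, m + 2} (fun k _ => probMass_nonneg μ X k) (hasSum_probMass hX)
    rw [sum_insert (by simp), sum_insert (by simp), sum_singleton, h₀, h₁] at hle
    show probMass μ X (m + 2) = 0
    exact le_antisymm (by linarith) (probMass_nonneg μ X _)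

lemma tsum_abs_probMass_sum_sub_poissonMass_le {ι : Type*} [IsProbabilityMeasure μ]
    {ξ : ι → Ω → ℕ} {q : ι → ℝ} (hmeas : ∀ i, Measurable (ξ i))
    (hind : iIndepFun ξ μ) (h₁ : ∀ i, probMass μ (ξ i) 1 = q i)
    (h₀ : ∀ i, probMass μ (ξ i) 0 = 1 - q i) (s : Finset ι) :
    ∑' n, |probMass μ (fun ω => ∑ i ∈ s, ξ i ω) n - poissonMass (∑ i ∈ s, q i) n| ≤
      2 * ∑ i ∈ s, q i ^ 2 := by
  classical
  have hq : ∀ i, 0 ≤ q i := fun i => h₁ i ▸ probMass_nonneg μ (ξ i) 1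
  induction s using Finset.induction_on with
  | empty =>
    have hzero : probMass μ (fun _ => 0) = poissonMass 0 := by
      funext n
      cases n <;> simp [probMass, poissonMass]
    simp [hzero]
  | insert j s hj ih =>
    have hS : Measurable fun ω => ∑ i ∈ s, ξ i ω := Finset.measurable_sum s fun i _ => hmeas i
    have hindep : IndepFun (fun ω => ∑ i ∈ s, ξ i ω) (ξ j) μ := by
      simpa only [Finset.sum_fn] using hind.indepFun_finsetSum_of_notMem hmeas hj
    have hsplit : (fun ω => ∑ i ∈ insert j s, ξ i ω) = (fun ω => ∑ i ∈ s, ξ i ω) + ξ j := by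
      funext ω
      rw [sum_insert hj, add_comm]
      rfl
    rw [hsplit, probMass_add hS (hmeas j) hindep, sum_insert hj, add_comm (q j),
      ← natConv_poissonMass, sum_insert hj]
    calc _ ≤ _ := tsum_abs_natConv_sub_natConv_le (hasSum_probMass hS).summable
          (poissonMass_nonneg (sum_nonneg fun i _ => hq i)) (hasSum_poissonMass _)
          (probMass_nonneg μ (ξ j)) (hasSum_probMass (hmeas j)) (hasSum_poissonMass _).summable
      _ ≤ 2 * ∑ i ∈ s, q i ^ 2 + 2 * q j ^ 2 :=
          add_le_add ih (probMass_eq_bernoulliMass (hmeas j) (h₁ j) (h₀ j) ▸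
            tsum_abs_bernoulliMass_sub_poissonMass_le (hq j))
      _ = _ := by ring

end Probability

end LeCam

open LeCam in
theorem le_cam_inequality_general {Ω : Type*} [MeasureSpace Ω]
    [IsProbabilityMeasure (ℙ : Measure Ω)]
    (a : ℕ) (ξ : Fin a → Ω → ℕ) (q : Fin a → ℝ)
    (hmeas : ∀ i, Measurable (ξ i))
    (hind : iIndepFun ξ ℙ)
    (hBern1 : ∀ i, (ℙ {ω | ξ i ω = 1}).toReal = q i)
    (hBern0 : ∀ i, (ℙ {ω | ξ i ω = 0}).toReal = 1 - q i) :
    ∑' j : ℕ,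
        |(ℙ {ω | (∑ i, ξ i ω) = j + 1}).toReal -
          (∑ i, q i) ^ (j + 1) * Real.exp (-(∑ i, q i)) / (j + 1).factorial|
      ≤ 2 * ∑ i, (q i) ^ 2 := by
  have hsummable : Summable fun n =>
      |probMass ℙ (fun ω => ∑ i, ξ i ω) n - poissonMass (∑ i, q i) n| :=
    ((hasSum_probMass (Finset.measurable_sum _ fun i _ => hmeas i)).summable.sub
      (hasSum_poissonMass _).summable).abs
  exact (tsum_comp_le_tsum_of_inj hsummable (fun _ => abs_nonneg _) (add_left_injective 1)).trans
    (tsum_abs_probMass_sum_sub_poissonMass_le hmeas hind hBern1 hBern0 Finset.univ)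

theorem le_cam_inequality {Ω : Type*} [MeasureSpace Ω]
    [IsProbabilityMeasure (ℙ : Measure Ω)]
    (a : ℕ) (ξ : Fin a → Ω → ℕ) (q : Fin a → ℝ)
    (hq : ∀ i, q i ∈ Set.Icc (0 : ℝ) 1)
    (hmeas : ∀ i, Measurable (ξ i))
    (hind : iIndepFun ξ ℙ)
    (hBern1 : ∀ i, (ℙ {ω | ξ i ω = 1}).toReal = q i)
    (hBern0 : ∀ i, (ℙ {ω | ξ i ω = 0}).toReal = 1 - q i) :
    ∑' j : ℕ,
        |(ℙ {ω | (∑ i, ξ i ω) = j + 1}).toReal -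
          (∑ i, q i) ^ (j + 1) * Real.exp (-(∑ i, q i)) / (j + 1).factorial|
      ≤ 2 * ∑ i, (q i) ^ 2 :=
  le_cam_inequality_general a ξ q hmeas hind hBern1 hBern0
end

section
/- Let (U_n) and (V_n) be sequences of real-valued, uniformly integrable random variables with U_n ≤ V_n almost surely for all n. If V_n converges in distribution to a random variable V and E[U_n] → E[V], then U_n converges in distribution to V. -/
/-!
Uniform integrability upgrades `V n ⇒ Vlim` to `𝔼[V n] → 𝔼[Vlim]`: the means of the
truncations `max (-K) (min x K)` converge by weak convergence, and the truncation errors are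
uniformly small for large `K`. Hence `𝔼[V n - U n] → 0`, and since `V n - U n ≥ 0` this is
convergence in `L¹`, so `U n - V n → 0` in probability and `U n` inherits the distributional
limit of `V n`.
-/

open MeasureTheory ProbabilityTheory Filter Topology
open scoped BoundedContinuousFunction

noncomputable def truncation (K : ℝ) : ℝ →ᵇ ℝ :=
  .ofNormedAddCommGroup (fun x => max (-K) (min x K)) (by fun_prop) |K| fun x => by
    simp only [Real.norm_eq_abs, abs_le]
    constructor <;> cases abs_cases K <;> grind

lemma truncation_apply (K x : ℝ) : truncation K x = max (-K) (min x K) := rfl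

lemma abs_sub_truncation_le {K K' x : ℝ} (hK : 0 ≤ K) (hK' : K' ≤ K) :
    |x - truncation K x| ≤ if K' < |x| then |x| else 0 := by
  rw [truncation_apply]
  split_ifs with hx <;> cases abs_cases x <;> cases abs_cases (x - max (-K) (min x K)) <;> grind

section Tail

variable {Ω : Type*} [MeasurableSpace Ω] {μ : Measure Ω} {W : Ω → ℝ}

lemma integrable_abs_mul_indicator_lt_abs (hW : Integrable W μ) (K : ℝ) :
    Integrable (fun ω => |W ω| * {ω' | K < |W ω'|}.indicator 1 ω) μ :=
  hW.abs.mul_bdd (c := 1) (aestronglyMeasurable_one.indicator₀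
    (nullMeasurableSet_lt aemeasurable_const hW.aemeasurable.abs))
    (ae_of_all _ fun ω => by
      simp only [Set.indicator_apply]; split_ifs <;> simp)

lemma tendsto_integral_abs_mul_indicator_lt_abs (hW : Integrable W μ) :
    Tendsto (fun K : ℝ => ∫ ω, |W ω| * {ω' | K < |W ω'|}.indicator 1 ω ∂μ) atTop (𝓝 0) := by
  have hlim : ∀ ω, Tendsto (fun K : ℝ => |W ω| * {ω' | K < |W ω'|}.indicator 1 ω) atTop (𝓝 0) :=
    fun ω => tendsto_const_nhds.congr' <| (eventually_ge_atTop |W ω|).mono fun K hK => by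
      simp [hK]
  simpa using tendsto_integral_filter_of_dominated_convergence (fun ω => |W ω|)
    (.of_forall fun K => (integrable_abs_mul_indicator_lt_abs hW K).aestronglyMeasurable)
    (.of_forall fun K => ae_of_all _ fun ω => by
      simp only [Set.indicator_apply]; split_ifs <;> simp)
    hW.abs (ae_of_all _ hlim)

variable [IsFiniteMeasure μ]

lemma abs_integral_sub_integral_truncation_le (hW : Integrable W μ) {K K' : ℝ} (hK : 0 ≤ K)
    (hK' : K' ≤ K) :
    |∫ ω, W ω ∂μ - ∫ ω, truncation K (W ω) ∂μ|
      ≤ ∫ ω, |W ω| * {ω' | K' < |W ω'|}.indicator 1 ω ∂μ := by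
  have htrunc : Integrable (fun ω => truncation K (W ω)) μ :=
    .of_bound ((truncation K).continuous.comp_aestronglyMeasurable hW.aestronglyMeasurable)
      ‖truncation K‖ (ae_of_all _ fun ω => (truncation K).norm_coe_le_norm _)
  rw [← integral_sub hW htrunc, ← Real.norm_eq_abs]
  refine norm_integral_le_of_norm_le (integrable_abs_mul_indicator_lt_abs hW K')
    (ae_of_all _ fun ω => ?_)
  simpa [Set.indicator_apply, mul_ite] using abs_sub_truncation_le (x := W ω) hK hK'

end Tail

lemma tendsto_integral_of_uniformly_integrable {Ω ι : Type*} [MeasurableSpace Ω]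
    {μ : Measure Ω} [IsFiniteMeasure μ] {l : Filter ι} {W : ι → Ω → ℝ} {WL : Ω → ℝ}
    (hW : ∀ i, Integrable (W i) μ) (hWL : Integrable WL μ)
    (hui : ∀ ε : ℝ, 0 < ε → ∃ K : ℝ, ∀ i,
      ∫ ω, |W i ω| * {ω' | K < |W i ω'|}.indicator 1 ω ∂μ ≤ ε)
    (hconv : ∀ f : ℝ →ᵇ ℝ, Tendsto (fun i => ∫ ω, f (W i ω) ∂μ) l (𝓝 (∫ ω, f (WL ω) ∂μ))) :
    Tendsto (fun i => ∫ ω, W i ω ∂μ) l (𝓝 (∫ ω, WL ω ∂μ)) := by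
  rw [Metric.tendsto_nhds]
  intro ε hε
  obtain ⟨K₁, hK₁⟩ := hui (ε / 3) (by positivity)
  obtain ⟨K, hK, hK₁K, hWL_tail⟩ := ((eventually_ge_atTop 0).and ((eventually_ge_atTop K₁).and
    ((tendsto_integral_abs_mul_indicator_lt_abs hWL).eventually
      (gt_mem_nhds (by positivity : (0 : ℝ) < ε / 3))))).exists
  filter_upwards [Metric.tendsto_nhds.1 (hconv (truncation K)) (ε / 3) (by positivity)]
    with i hi
  have hW_err := (abs_integral_sub_integral_truncation_le (hW i) hK hK₁K).trans (hK₁ i)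
  have hWL_err := (abs_integral_sub_integral_truncation_le hWL hK le_rfl).trans hWL_tail.le
  rw [Real.dist_eq, abs_sub_lt_iff] at hi ⊢
  rw [abs_le] at hW_err hWL_err
  constructor <;> linarith [hW_err.1, hW_err.2, hWL_err.1, hWL_err.2]

lemma tendstoInDistribution_iff_forall_tendsto_integral {Ω Ω' E ι : Type*} [MeasurableSpace Ω]
    [MeasurableSpace Ω'] [TopologicalSpace E] [MeasurableSpace E] [OpensMeasurableSpace E]
    {μ : Measure Ω} [IsProbabilityMeasure μ] {μ' : Measure Ω'} [IsProbabilityMeasure μ']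
    {l : Filter ι} {X : ι → Ω → E} {Z : Ω' → E}
    (hX : ∀ i, AEMeasurable (X i) μ) (hZ : AEMeasurable Z μ') :
    TendstoInDistribution X l Z (fun _ => μ) μ' ↔
      ∀ f : E →ᵇ ℝ, Tendsto (fun i => ∫ ω, f (X i ω) ∂μ) l (𝓝 (∫ ω, f (Z ω) ∂μ')) := by
  refine ⟨fun h => ?_, fun h => ⟨hX, hZ, ?_⟩⟩
  · intro f
    have := ProbabilityMeasure.tendsto_iff_forall_integral_tendsto.1 h.tendsto f
    simpa [integral_map (hX _) f.continuous.aestronglyMeasurable,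
      integral_map hZ f.continuous.aestronglyMeasurable] using this
  · refine ProbabilityMeasure.tendsto_iff_forall_integral_tendsto.2 fun f => ?_
    simpa [integral_map (hX _) f.continuous.aestronglyMeasurable,
      integral_map hZ f.continuous.aestronglyMeasurable] using h f

lemma tendstoInMeasure_zero_of_tendsto_integral_norm {Ω E ι : Type*} [MeasurableSpace Ω]
    [NormedAddCommGroup E] {μ : Measure Ω} {l : Filter ι} {f : ι → Ω → E}
    (hf : ∀ i, Integrable (f i) μ) (h : Tendsto (fun i => ∫ ω, ‖f i ω‖ ∂μ) l (𝓝 0)) :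
    TendstoInMeasure μ f l 0 := by
  refine tendstoInMeasure_of_tendsto_eLpNorm one_ne_zero (fun i => (hf i).aestronglyMeasurable)
    aestronglyMeasurable_const ?_
  simpa [eLpNorm_one_eq_lintegral_enorm, ← ofReal_integral_norm_eq_lintegral_enorm (hf _)]
    using ENNReal.tendsto_ofReal h

theorem tendsto_of_le_of_mean_tendsto_general {Ω : Type*} [MeasureSpace Ω]
    [IsProbabilityMeasure (ℙ : Measure Ω)]
    (U V : ℕ → Ω → ℝ) (Vlim : Ω → ℝ)
    (hUint : ∀ n, Integrable (U n)) (hVint : ∀ n, Integrable (V n))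
    (hVlimint : Integrable Vlim)
    (hVui : ∀ ε : ℝ, 0 < ε → ∃ K : ℝ, ∀ n,
      ∫ ω, |V n ω| * Set.indicator {ω' | K < |V n ω'|} 1 ω ≤ ε)
    (hle : ∀ n, ∀ᵐ ω ∂(ℙ : Measure Ω), U n ω ≤ V n ω)
    (hVconv : ∀ f : BoundedContinuousFunction ℝ ℝ,
      Tendsto (fun n => ∫ ω, f (V n ω)) atTop (nhds (∫ ω, f (Vlim ω))))
    (hmean : Tendsto (fun n => ∫ ω, U n ω) atTop (nhds (∫ ω, Vlim ω))) :
    ∀ f : BoundedContinuousFunction ℝ ℝ,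
      Tendsto (fun n => ∫ ω, f (U n ω)) atTop (nhds (∫ ω, f (Vlim ω))) := by
  have hV : TendstoInDistribution V atTop Vlim (fun _ => ℙ) ℙ :=
    (tendstoInDistribution_iff_forall_tendsto_integral (fun n => (hVint n).aemeasurable)
      hVlimint.aemeasurable).2 hVconv
  have hVmean : Tendsto (fun n => ∫ ω, V n ω) atTop (𝓝 (∫ ω, Vlim ω)) :=
    tendsto_integral_of_uniformly_integrable hVint hVlimint hVui hVconv
  have hgap : ∀ n, ∫ ω, |U n ω - V n ω| = (∫ ω, V n ω) - ∫ ω, U n ω := fun n => by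
    refine (integral_congr_ae ((hle n).mono fun ω hω => ?_)).trans
      (integral_sub (hVint n) (hUint n))
    simp [abs_of_nonpos (sub_nonpos.2 hω)]
  have hU_sub_V : TendstoInMeasure ℙ (U - V) atTop 0 :=
    tendstoInMeasure_zero_of_tendsto_integral_norm (fun n => (hUint n).sub (hVint n))
      (by simpa [hgap] using hVmean.sub hmean)
  exact (tendstoInDistribution_iff_forall_tendsto_integral (fun n => (hUint n).aemeasurable)
    hVlimint.aemeasurable).1
    (tendstoInDistribution_of_tendstoInMeasure_sub U Vlim hV hU_sub_V
      fun n => (hUint n).aemeasurable)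

theorem tendsto_of_le_of_mean_tendsto {Ω : Type*} [MeasureSpace Ω]
    [IsProbabilityMeasure (ℙ : Measure Ω)]
    (U V : ℕ → Ω → ℝ) (Vlim : Ω → ℝ)
    (hUmeas : ∀ n, Measurable (U n)) (hVmeas : ∀ n, Measurable (V n))
    (hVlimmeas : Measurable Vlim)
    (hUint : ∀ n, Integrable (U n)) (hVint : ∀ n, Integrable (V n))
    (hVlimint : Integrable Vlim)
    -- uniform integrability of (U n) : sup_n E[|U_n| 1_{|U_n| > K}] → 0 as K → ∞
    (hUui : ∀ ε : ℝ, 0 < ε → ∃ K : ℝ, ∀ n,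
      ∫ ω, |U n ω| * Set.indicator {ω' | K < |U n ω'|} 1 ω ≤ ε)
    (hVui : ∀ ε : ℝ, 0 < ε → ∃ K : ℝ, ∀ n,
      ∫ ω, |V n ω| * Set.indicator {ω' | K < |V n ω'|} 1 ω ≤ ε)
    (hle : ∀ n, ∀ᵐ ω ∂(ℙ : Measure Ω), U n ω ≤ V n ω)
    (hVconv : ∀ f : BoundedContinuousFunction ℝ ℝ,
      Tendsto (fun n => ∫ ω, f (V n ω)) atTop (nhds (∫ ω, f (Vlim ω))))
    (hmean : Tendsto (fun n => ∫ ω, U n ω) atTop (nhds (∫ ω, Vlim ω))) :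
    ∀ f : BoundedContinuousFunction ℝ ℝ,
      Tendsto (fun n => ∫ ω, f (U n ω)) atTop (nhds (∫ ω, f (Vlim ω))) :=
  tendsto_of_le_of_mean_tendsto_general U V Vlim hUint hVint hVlimint hVui hle hVconv hmean
end

section
/- Let p_n → 0 with p_n ln n → ∞, fix u > 0, and set y_n = ⌊u·p_n^{−1}·n^{p_n}⌋. Then the logarithm of I_n := √(2π)·n·(1/p_n)^{1/p_n+1/2}·y_n^{y_n+1/2}/(1/p_n + y_n)^{1/p_n+y_n+1/2} satisfies: if u > e^{−1} then ln I_n → −∞, and if u < e^{−1} then ln I_n → +∞; hence I_n → 0 in the first case and I_n → ∞ in the second. -/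
/-! Multiplying by `p = pₙ` turns the divergence of `log Iₙ` into a finite limit. With
`M = u p⁻¹ n^p`, so that `y = ⌊M⌋`, and `ln (1/p + y) = ln y + ln (1 + 1/(p y))`, one has
`p ln I = p ln √(2π) - (p ln p)/2 - ln u - ln (y/M) - (1 + p/2 + p y) ln (1 + 1/(p y))`.
Since `p → 0`, `y/M → 1` and `p y ~ u n^p → ∞`, the right side tends to `-1 - ln u` (as `z ln (1 + 1/z) → 1`),
whose sign is that of `e⁻¹ - u`; dividing by `p → 0⁺` gives `ln I → ∓∞`. -/

open Real Filter Topology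

theorem tendsto_inv_atTop_of_pos {ι : Type*} {l : Filter ι} {p : ι → ℝ} (hp : ∀ i, 0 < p i)
    (hp0 : Tendsto p l (𝓝 0)) : Tendsto (fun i => (p i)⁻¹) l atTop :=
  tendsto_inv_nhdsGT_zero.comp (tendsto_nhdsWithin_iff.2 ⟨hp0, .of_forall hp⟩)

theorem eventuallyEq_exp_log {ι : Type*} {l : Filter ι} {f : ι → ℝ} (hf : ∀ i, 0 ≤ f i)
    (hlog : ∀ᶠ i in l, log (f i) ≠ 0) : (fun i => exp (log (f i))) =ᶠ[l] f :=
  hlog.mono fun i hi => exp_log <| (hf i).lt_of_ne' fun h => hi (by rw [h, log_zero])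

theorem tendsto_atBot_of_tendsto_mul {ι : Type*} {l : Filter ι} {p f : ι → ℝ} {c : ℝ}
    (hc : c < 0) (hp : Tendsto (fun i => (p i)⁻¹) l atTop)
    (hpf : Tendsto (fun i => p i * f i) l (𝓝 c)) : Tendsto f l atBot :=
  (hp.atTop_mul_neg hc hpf).congr' <| (hp.eventually_gt_atTop 0).mono fun i hi => by
    simp [inv_mul_cancel_left₀ (inv_pos.1 hi).ne']

theorem tendsto_atTop_of_tendsto_mul {ι : Type*} {l : Filter ι} {p f : ι → ℝ} {c : ℝ}
    (hc : 0 < c) (hp : Tendsto (fun i => (p i)⁻¹) l atTop)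
    (hpf : Tendsto (fun i => p i * f i) l (𝓝 c)) : Tendsto f l atTop :=
  (hp.atTop_mul_pos hc hpf).congr' <| (hp.eventually_gt_atTop 0).mono fun i hi => by
    simp [inv_mul_cancel_left₀ (inv_pos.1 hi).ne']

theorem mul_log_I_eq {p x Y u : ℝ} (hp : 0 < p) (hx : 0 < x) (hY : 0 < Y) (hu : 0 < u) :
    p * log (√(2 * π) * x * (1 / p) ^ (1 / p + 1 / 2) * Y ^ (Y + 1 / 2) /
        (1 / p + Y) ^ (1 / p + Y + 1 / 2)) =
      p * log √(2 * π) - p * log p / 2 - log u - log (Y / (u * p⁻¹ * exp (p * log x)))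
        - (1 + p / 2) * log (1 + 1 / (p * Y)) - p * Y * log (1 + 1 / (p * Y)) := by
  have hsum : log (1 / p + Y) = log Y + log (1 + 1 / (p * Y)) := by
    rw [← log_mul hY.ne' (by positivity)]
    congr 1
    field_simp
    ring
  have hratio : log (Y / (u * p⁻¹ * exp (p * log x))) = log Y - log u + log p - p * log x := by
    rw [log_div hY.ne' (by positivity), log_mul (by positivity) (exp_pos _).ne',
      log_mul hu.ne' (by positivity), log_inv, log_exp]
    ring
  rw [log_div (by positivity) (by positivity), log_mul (by positivity) (by positivity),
    log_mul (by positivity) (by positivity), log_mul (by positivity) (by positivity),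
    log_rpow (by positivity), log_rpow hY, log_rpow (by positivity), hsum, hratio, one_div,
    log_inv]
  field_simp
  ring

theorem tendsto_mul_log_I {p : ℕ → ℝ} (hp : ∀ n, 0 < p n) (hp0 : Tendsto p atTop (𝓝 0))
    (hplog : Tendsto (fun n : ℕ => p n * log n) atTop atTop) {u : ℝ} (hu : 0 < u)
    {y : ℕ → ℕ} (hy : ∀ n, y n = ⌊u * (p n)⁻¹ * exp (p n * log n)⌋₊) {I : ℕ → ℝ}
    (hI : ∀ n, I n = √(2 * π) * n * (1 / p n) ^ (1 / p n + 1 / 2) *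
        (y n : ℝ) ^ ((y n : ℝ) + 1 / 2) / (1 / p n + (y n : ℝ)) ^ (1 / p n + (y n : ℝ) + 1 / 2)) :
    Tendsto (fun n => p n * log (I n)) atTop (𝓝 (-1 - log u)) := by
  set M : ℕ → ℝ := fun n => u * (p n)⁻¹ * exp (p n * log n) with hM
  have hn_pow : Tendsto (fun n : ℕ => u * exp (p n * log n)) atTop atTop :=
    (tendsto_exp_atTop.comp hplog).const_mul_atTop hu
  have hM_top : Tendsto M atTop atTop := by
    refine ((tendsto_inv_atTop_of_pos hp hp0).atTop_mul_atTop₀ hn_pow).congr fun n => ?_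
    simp only [hM]
    ring
  have hratio : Tendsto (fun n => (y n : ℝ) / M n) atTop (𝓝 1) := by
    refine (tendsto_nat_floor_div_atTop.comp hM_top).congr fun n => ?_
    simp only [Function.comp_apply, hy, hM]
  have hpy : Tendsto (fun n => p n * y n) atTop atTop := by
    refine (hratio.pos_mul_atTop one_pos hn_pow).congr fun n => ?_
    have := hp n
    simp only [hM]
    field_simp
  have hy_pos : ∀ᶠ n in atTop, 0 < (y n : ℝ) :=
    (hpy.eventually_gt_atTop 0).mono fun n h => pos_of_mul_pos_right h (hp n).le
  have hlog_ratio : Tendsto (fun n => log ((y n : ℝ) / M n)) atTop (𝓝 0) := by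
    simpa [Function.comp_def] using (continuousAt_log one_ne_zero).tendsto.comp hratio
  have hlog_one_add : Tendsto (fun n => log (1 + 1 / (p n * y n))) atTop (𝓝 0) := by
    simpa [Function.comp_def] using
      (continuousAt_log (by norm_num : (1 : ℝ) + 0 ≠ 0)).tendsto.comp
        (tendsto_const_nhds.add (tendsto_inv_atTop_zero.comp hpy))
  have hp_log_p : Tendsto (fun n => p n * log (p n)) atTop (𝓝 0) := by
    simpa [Function.comp_def] using (continuous_mul_log.tendsto 0).comp hp0
  have hlim := (((((hp0.mul_const (log √(2 * π))).sub (hp_log_p.div_const 2)).sub_const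
    (log u)).sub hlog_ratio).sub (((tendsto_const_nhds (x := (1 : ℝ))).add (hp0.div_const 2)).mul
      hlog_one_add)).sub ((tendsto_mul_log_one_add_div_atTop 1).comp hpy)
  rw [show (0 : ℝ) * log √(2 * π) - 0 / 2 - log u - 0 - (1 + 0 / 2) * 0 - 1 = -1 - log u by ring]
    at hlim
  refine hlim.congr' ?_
  filter_upwards [hy_pos, eventually_gt_atTop 0] with n hyn hn
  rw [hI n, mul_log_I_eq (hp n) (Nat.cast_pos.2 hn) hyn hu]
  rfl

theorem log_I_n_divergence (p : ℕ → ℝ) (hp : ∀ n, 0 < p n)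
    (hp0 : Filter.Tendsto p Filter.atTop (nhds 0))
    (hplog : Filter.Tendsto (fun n : ℕ => p n * Real.log n) Filter.atTop Filter.atTop)
    (u : ℝ) (hu : 0 < u)
    (y : ℕ → ℕ) (hy : ∀ n, y n = ⌊u * (p n)⁻¹ * Real.exp (p n * Real.log n)⌋₊)
    (I : ℕ → ℝ)
    (hI : ∀ n, I n = Real.sqrt (2 * Real.pi) * n * (1 / p n) ^ (1 / p n + 1 / 2) *
        (y n : ℝ) ^ ((y n : ℝ) + 1 / 2) / (1 / p n + (y n : ℝ)) ^ (1 / p n + (y n : ℝ) + 1 / 2)) :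
    (Real.exp (-1) < u →
      Filter.Tendsto (fun n => Real.log (I n)) Filter.atTop Filter.atBot ∧
        Filter.Tendsto I Filter.atTop (nhds 0)) ∧
    (u < Real.exp (-1) →
      Filter.Tendsto (fun n => Real.log (I n)) Filter.atTop Filter.atTop ∧
        Filter.Tendsto I Filter.atTop Filter.atTop) := by
  have hlim := tendsto_mul_log_I hp hp0 hplog hu hy hI
  have hp_inv := tendsto_inv_atTop_of_pos hp hp0
  have hI_nonneg : ∀ n, 0 ≤ I n := fun n => by have := hp n; rw [hI n]; positivity
  refine ⟨fun hu_gt => ?_, fun hu_lt => ?_⟩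
  · have hbot := tendsto_atBot_of_tendsto_mul
      (by linarith [(lt_log_iff_exp_lt hu).2 hu_gt]) hp_inv hlim
    exact ⟨hbot, (tendsto_exp_atBot.comp hbot).congr'
      (eventuallyEq_exp_log hI_nonneg (hbot.eventually_ne_atBot 0))⟩
  · have htop := tendsto_atTop_of_tendsto_mul
      (by linarith [(log_lt_iff_lt_exp hu).2 hu_lt]) hp_inv hlim
    exact ⟨htop, (tendsto_exp_atTop.comp htop).congr'
      (eventuallyEq_exp_log hI_nonneg (htop.eventually_ne_atTop 0))⟩
end
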